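/- In the Verma module M(Λ,≻) over B(G), for ε' ≻ 0 one has L_{ε',-1} L_{-ε',-1} v_Λ = Λ(c) v_Λ (up to the factor ε'), and for k ≥ 0, L_{ε',k} L_{-ε',-1} v_Λ = -(k+1) ε' Λ(L_{0,k-1}) v_Λ. Consequently, if L_{-ε',-1} v_Λ lies in a submodule W and Λ ≠ 0, then v_Λ ∈ W. -/

import Mathlib

open UniversalEnvelopingAlgebra

/-- Indices `i ∈ ℤ`, `i ≥ -1`. -/
abbrev BIdx : Type := {i : ℤ // -1 ≤ i}

variable {F : Type*} [Field F] [CharZero F] {G : AddSubgroup F}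
variable {B : Type*} [LieRing B] [LieAlgebra F B]

open scoped Classical in
/-- The family `L : G → BIdx → B` together with `c : B` satisfies the defining
relations of the Block type Lie algebra `B(G)`:
`[L_{α,i}, L_{β,j}] = ((i+1)β - (j+1)α) L_{α+β,i+j} + α δ_{α,-β} δ_{i+j,-2} c`
(the term `L_{α+β,i+j}` being interpreted as `0` when `i+j < -1`), and
`[c, L_{α,i}] = 0`. -/
def IsBlockAlgebra (L : G → BIdx → B) (c : B) : Prop :=
  (∀ (α β : G) (i j : BIdx),
      ⁅L α i, L β j⁆ =
        (if h : (-1 : ℤ) ≤ i.1 + j.1 then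
            ((((i.1 : F) + 1) * (β : F)) - (((j.1 : F) + 1) * (α : F))) •
              L (α + β) ⟨i.1 + j.1, h⟩
          else 0)
        + (if α = -β ∧ i.1 + j.1 = -2 then (α : F) • c else 0))
  ∧ (∀ (α : G) (i : BIdx), ⁅c, L α i⁆ = 0)

section Defs

variable (F) (L : G → BIdx → B) (c : B)

open scoped Classical in
/-- The homogeneous component `B(G)_α = span{L_{α,i} | i ≥ -1} + δ_{α,0} F c`. -/
noncomputable def blockWt (α : G) : Submodule F B :=
  Submodule.span F (Set.range (L α) ∪ (if α = 0 then {c} else ∅))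

end Defs

section Verma

variable (F) [LinearOrder G] (L : G → BIdx → B) (c : B) (Λ0 : BIdx → F) (Λc : F)

/-- The generators of the left ideal `I(Λ, ≻)` of `U(B(G))`: the elements
`L_{α,i}` with `α ≻ 0`, and `h - Λ(h)·1` for `h ∈ B(G)_0` (it suffices to take
`h` among the spanning vectors `L_{0,i}` and `c` of `B(G)_0`, where
`Λ0 : BIdx → F` and `Λc : F` record the values of `Λ ∈ B(G)_0^*` on them). -/
def vermaGens : Set (UniversalEnvelopingAlgebra F B) :=
  {x | ∃ (α : G) (i : BIdx), 0 < α ∧ x = ι F (L α i)}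
    ∪ {x | ∃ i : BIdx, x = ι F (L 0 i) - algebraMap F (UniversalEnvelopingAlgebra F B) (Λ0 i)}
    ∪ {ι F c - algebraMap F (UniversalEnvelopingAlgebra F B) Λc}

/-- The left ideal `I(Λ, ≻)` of `U(B(G))`. -/
def vermaIdeal : Submodule (UniversalEnvelopingAlgebra F B) (UniversalEnvelopingAlgebra F B) :=
  Submodule.span (UniversalEnvelopingAlgebra F B) (vermaGens F L c Λ0 Λc)

/-- The Verma module `M(Λ, ≻) = U(B(G)) / I(Λ, ≻)`. -/
abbrev VermaMod : Type _ :=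
  UniversalEnvelopingAlgebra F B ⧸ vermaIdeal F L c Λ0 Λc

/-- The highest weight vector `v_Λ`, the image of `1` in `M(Λ, ≻)`. -/
def hwVec : VermaMod F L c Λ0 Λc :=
  Submodule.Quotient.mk 1

/-- The monomial `L_{α_1,i_1} ⋯ L_{α_k,i_k} ∈ U(B(G))` attached to the list
`l = [(α_1,i_1),…,(α_k,i_k)]`. -/
def blockMono (l : List (G × BIdx)) : UniversalEnvelopingAlgebra F B :=
  (l.map fun p => ι F (L p.1 p.2)).prod

/-- The weight space `M_α` of the Verma module: the span of the vectors
`L_{-α_1,i_1} ⋯ L_{-α_k,i_k} v_Λ` with all `α_j ≻ 0` and `α_1 + ⋯ + α_k = -α`. -/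
def vermaWt (α : G) : Submodule F (VermaMod F L c Λ0 Λc) :=
  Submodule.span F {m | ∃ l : List (G × BIdx), (∀ p ∈ l, p.1 < 0)
    ∧ (l.map Prod.fst).sum = α
    ∧ m = Submodule.Quotient.mk (blockMono F L l)}

end Verma

/-- In the Verma module `M(Λ,≻)`, for `ε' ≻ 0` one has
`L_{ε',-1} L_{-ε',-1} v_Λ = ε' Λ(c) v_Λ` and, for `k ≥ 0`,
`L_{ε',k} L_{-ε',-1} v_Λ = -(k+1) ε' Λ(L_{0,k-1}) v_Λ`. Consequently, if
`L_{-ε',-1} v_Λ` lies in a submodule `W` and `Λ ≠ 0`, then `v_Λ ∈ W`. -/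
theorem verma_hw_recovery [LinearOrder G]
    (hord : ∀ x y z : G, x < y → x + z < y + z)
    (L : G → BIdx → B) (c : B)
    (hrel : IsBlockAlgebra L c)
    (b : Module.Basis ((G × BIdx) ⊕ Unit) F B)
    (hbL : ∀ p : G × BIdx, b (Sum.inl p) = L p.1 p.2)
    (hbc : b (Sum.inr ()) = c)
    (Λ0 : BIdx → F) (Λc : F)
    (ε' : G) (hε' : 0 < ε') :
    -- `L_{ε',-1} L_{-ε',-1} v_Λ = ε' Λ(c) v_Λ`:
    ((ι F (L ε' ⟨-1, le_refl _⟩) : UniversalEnvelopingAlgebra F B) •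
        ((ι F (L (-ε') ⟨-1, le_refl _⟩) : UniversalEnvelopingAlgebra F B) •
          hwVec F L c Λ0 Λc)
      = ((ε' : F) * Λc) • hwVec F L c Λ0 Λc)
    -- `L_{ε',k} L_{-ε',-1} v_Λ = -(k+1) ε' Λ(L_{0,k-1}) v_Λ` for `k ≥ 0`:
    ∧ (∀ k : ℕ,
        (ι F (L ε' ⟨(k : ℤ), by omega⟩) : UniversalEnvelopingAlgebra F B) •
            ((ι F (L (-ε') ⟨-1, le_refl _⟩) : UniversalEnvelopingAlgebra F B) •
              hwVec F L c Λ0 Λc)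
          = (-(((k : F) + 1) * (ε' : F)) * Λ0 ⟨(k : ℤ) - 1, by omega⟩) •
              hwVec F L c Λ0 Λc)
    -- consequence: if `Λ ≠ 0` and `L_{-ε',-1} v_Λ ∈ W`, then `v_Λ ∈ W`:
    ∧ (∀ W : Submodule (UniversalEnvelopingAlgebra F B) (VermaMod F L c Λ0 Λc),
        (ι F (L (-ε') ⟨-1, le_refl _⟩) : UniversalEnvelopingAlgebra F B) •
            hwVec F L c Λ0 Λc ∈ W →
        (Λ0 ≠ 0 ∨ Λc ≠ 0) → hwVec F L c Λ0 Λc ∈ W) := by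

  classical
  have hmk : ∀ u : UniversalEnvelopingAlgebra F B,
      u • hwVec F L c Λ0 Λc = Submodule.Quotient.mk u := by
    intro u
    show u • (Submodule.Quotient.mk 1 : VermaMod F L c Λ0 Λc) = _
    rw [← Submodule.Quotient.mk_smul, smul_eq_mul, mul_one]
  have hzero : ∀ x ∈ vermaIdeal F L c Λ0 Λc,
      (Submodule.Quotient.mk x : VermaMod F L c Λ0 Λc) = 0 :=
    fun x hx => (Submodule.Quotient.mk_eq_zero _).2 hx
  have hmks : ∀ (s : F) (x : UniversalEnvelopingAlgebra F B),
      (Submodule.Quotient.mk (s • x) : VermaMod F L c Λ0 Λc)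
        = s • Submodule.Quotient.mk x := by
    intro s x
    rw [← algebraMap_smul (UniversalEnvelopingAlgebra F B) s x,
      Submodule.Quotient.mk_smul, algebraMap_smul]
  have hpos : ∀ (α : G) (i : BIdx), 0 < α → ∀ u : UniversalEnvelopingAlgebra F B,
      (Submodule.Quotient.mk (u * ι F (L α i)) : VermaMod F L c Λ0 Λc) = 0 := by
    intro α i hα u
    refine hzero _ ?_
    have hg : (ι F (L α i) : UniversalEnvelopingAlgebra F B) ∈ vermaIdeal F L c Λ0 Λc :=
      Submodule.subset_span (Or.inl (Or.inl ⟨α, i, hα, rfl⟩))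
    simpa [smul_eq_mul] using Submodule.smul_mem _ u hg
  have hL0 : ∀ i : BIdx,
      (Submodule.Quotient.mk (ι F (L 0 i)) : VermaMod F L c Λ0 Λc)
        = Λ0 i • hwVec F L c Λ0 Λc := by
    intro i
    have hg : (ι F (L 0 i) - algebraMap F (UniversalEnvelopingAlgebra F B) (Λ0 i))
        ∈ vermaIdeal F L c Λ0 Λc :=
      Submodule.subset_span (Or.inl (Or.inr ⟨i, rfl⟩))
    have h1 : (Submodule.Quotient.mk
        (ι F (L 0 i) - algebraMap F (UniversalEnvelopingAlgebra F B) (Λ0 i))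
        : VermaMod F L c Λ0 Λc) = 0 := hzero _ hg
    rw [Submodule.Quotient.mk_sub, sub_eq_zero] at h1
    rw [h1, Algebra.algebraMap_eq_smul_one, hmks]
    rfl
  have hcv : (Submodule.Quotient.mk (ι F c) : VermaMod F L c Λ0 Λc)
      = Λc • hwVec F L c Λ0 Λc := by
    have hg : (ι F c - algebraMap F (UniversalEnvelopingAlgebra F B) Λc)
        ∈ vermaIdeal F L c Λ0 Λc :=
      Submodule.subset_span (Or.inr rfl)
    have h1 : (Submodule.Quotient.mk
        (ι F c - algebraMap F (UniversalEnvelopingAlgebra F B) Λc)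
        : VermaMod F L c Λ0 Λc) = 0 := hzero _ hg
    rw [Submodule.Quotient.mk_sub, sub_eq_zero] at h1
    rw [h1, Algebra.algebraMap_eq_smul_one, hmks]
    rfl
  have hcomm : ∀ a b : B, (ι F a : UniversalEnvelopingAlgebra F B) * ι F b
      = ι F b * ι F a + ι F ⁅a, b⁆ := by
    intro a b
    letI := LieRing.ofAssociativeRing (A := UniversalEnvelopingAlgebra F B)
    letI := LieAlgebra.ofAssociativeAlgebra (R := F) (A := UniversalEnvelopingAlgebra F B)
    have h := LieHom.map_lie (ι F (L := B)) a b
    rw [Ring.lie_def] at h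
    rw [h]; abel
  have hε'F : (ε' : F) ≠ 0 := by
    simpa using ne_of_gt hε'
  -- Part 1
  have part1 : ((ι F (L ε' ⟨-1, le_refl _⟩) : UniversalEnvelopingAlgebra F B) •
        ((ι F (L (-ε') ⟨-1, le_refl _⟩) : UniversalEnvelopingAlgebra F B) •
          hwVec F L c Λ0 Λc)
      = ((ε' : F) * Λc) • hwVec F L c Λ0 Λc) := by
    rw [smul_smul, hmk, hcomm, Submodule.Quotient.mk_add, hpos ε' _ hε']
    have hbr : ⁅L ε' ⟨-1, le_refl _⟩, L (-ε') ⟨-1, le_refl _⟩⁆ = (ε' : F) • c := by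
      rw [hrel.1]
      norm_num
    rw [hbr, map_smul, hmks, hcv, zero_add, smul_smul]
  -- Part 2
  have part2 : ∀ k : ℕ,
      (ι F (L ε' ⟨(k : ℤ), by omega⟩) : UniversalEnvelopingAlgebra F B) •
          ((ι F (L (-ε') ⟨-1, le_refl _⟩) : UniversalEnvelopingAlgebra F B) •
            hwVec F L c Λ0 Λc)
        = (-(((k : F) + 1) * (ε' : F)) * Λ0 ⟨(k : ℤ) - 1, by omega⟩) •
            hwVec F L c Λ0 Λc := by
    intro k
    rw [smul_smul, hmk, hcomm, Submodule.Quotient.mk_add, hpos ε' _ hε']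
    have hle : (-1 : ℤ) ≤ (k : ℤ) + (-1) := by omega
    have hbr : ⁅L ε' ⟨(k : ℤ), by omega⟩, L (-ε') ⟨-1, le_refl _⟩⁆
        = (-(((k : F) + 1) * (ε' : F))) • L 0 ⟨(k : ℤ) - 1, by omega⟩ := by
      rw [hrel.1]
      rw [dif_pos hle, if_neg (by omega : ¬(ε' = -(-ε') ∧ (k : ℤ) + (-1) = -2))]
      have h1 : ε' + -ε' = 0 := by simp
      have h2 : (⟨(k : ℤ) + (-1), hle⟩ : BIdx) = ⟨(k : ℤ) - 1, by omega⟩ :=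
        Subtype.ext (show (k:ℤ) + (-1) = (k:ℤ) - 1 by omega)
      rw [add_zero, h1, h2]
      congr 1
      push_cast
      ring
    rw [hbr, map_smul, hmks, hL0, zero_add, smul_smul]
  refine ⟨part1, part2, ?_⟩
  intro W hW hΛ
  have hFsmul : ∀ (s : F) (m : VermaMod F L c Λ0 Λc), m ∈ W → s • m ∈ W := by
    intro s m hm
    have := W.smul_mem (algebraMap F (UniversalEnvelopingAlgebra F B) s) hm
    rwa [algebraMap_smul] at this
  rcases hΛ with hΛ0 | hΛc
  · obtain ⟨i, hi⟩ : ∃ i, Λ0 i ≠ 0 := by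
      by_contra h
      push_neg at h
      exact hΛ0 (funext h)
    set k : ℕ := (i.1 + 1).toNat with hk
    have hki : ((k : ℤ) : ℤ) - 1 = i.1 := by
      have := i.2
      omega
    have hidx : (⟨(k : ℤ) - 1, by omega⟩ : BIdx) = i := Subtype.ext hki
    have h2 := part2 k
    rw [hidx] at h2
    set t : F := -(((k : F) + 1) * (ε' : F)) * Λ0 i with ht
    have htne : t ≠ 0 := by
      have hk1 : ((k : F) + 1) ≠ 0 := Nat.cast_add_one_ne_zero k
      simp only [ht, ne_eq, neg_mul, neg_eq_zero, mul_eq_zero, not_or]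
      exact ⟨⟨hk1, hε'F⟩, hi⟩
    have hmem : t • hwVec F L c Λ0 Λc ∈ W := by
      rw [← h2]
      exact W.smul_mem _ hW
    have := hFsmul t⁻¹ _ hmem
    rwa [smul_smul, inv_mul_cancel₀ htne, one_smul] at this
  · set t : F := (ε' : F) * Λc with ht
    have htne : t ≠ 0 := mul_ne_zero hε'F hΛc
    have hmem : t • hwVec F L c Λ0 Λc ∈ W := by
      rw [← part1]
      exact W.smul_mem _ hW
    have := hFsmul t⁻¹ _ hmem
    rwa [smul_smul, inv_mul_cancel₀ htne, one_smul] at this
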